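/- Let R be a commutative ring, and let a, b ∈ R, and d, e : Fin n → R satisfy: (i) a = b + ∑ j, d j; (ii) for every j, (e j) * (d j) = a * (d j); (iii) for j ≠ j', (d j) * (d j') = 0. Then for every k ≥ 0, a^k = b^k + ∑ j, ∑_{k'=0}^{k-1} (e j)^{k'} * b^{k-1-k'} * (d j). -/

import Mathlib

/-! Factor `a ^ k - b ^ k = (∑ i < k, a ^ i * b ^ (k - 1 - i)) * (a - b)` and substitute
`a - b = ∑ j, d j`; on the multiples of `d j`, multiplication by `a` agrees with
multiplication by `e j`, so `a ^ i * d j = e j ^ i * d j`. -/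

theorem pow_mul_eq_pow_mul_of_mul_eq_mul {M : Type*} [CommMonoid M] {a e d : M}
    (h : e * d = a * d) (k : ℕ) : a ^ k * d = e ^ k * d := by
  induction k with
  | zero => simp
  | succ k ih =>
    calc a ^ (k + 1) * d = e * (a ^ k * d) := by rw [pow_succ, mul_assoc, ← h, mul_left_comm]
      _ = e ^ (k + 1) * d := by rw [ih, ← mul_assoc, ← pow_succ']

theorem stmt_9_general {R : Type*} [CommRing R] (n : ℕ) (a b : R) (d e : Fin n → R)
    (h1 : a = b + ∑ j, d j)
    (h2 : ∀ j, e j * d j = a * d j) :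
    ∀ k : ℕ, a ^ k =
      b ^ k + ∑ j, ∑ k' ∈ Finset.range k, (e j) ^ k' * b ^ (k - 1 - k') * d j := by
  intro k
  have hab : a - b = ∑ j, d j := sub_eq_iff_eq_add'.mpr h1
  calc a ^ k = b ^ k + (∑ i ∈ Finset.range k, a ^ i * b ^ (k - 1 - i)) * (a - b) := by
        rw [geom_sum₂_mul]; ring
    _ = b ^ k + ∑ j, ∑ i ∈ Finset.range k, a ^ i * b ^ (k - 1 - i) * d j := by
        rw [hab, Finset.mul_sum]; simp only [Finset.sum_mul]
    _ = _ := by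
        congr! 3 with j - i -
        rw [mul_right_comm, pow_mul_eq_pow_mul_of_mul_eq_mul (h2 j), mul_right_comm]

/-- Abstract form of the ψ_min comparison: if `a = b + ∑ d j`, `e j * d j = a * d j`, and
`d j * d j' = 0` for `j ≠ j'`, then
`a ^ k = b ^ k + ∑ j, ∑_{k' < k} (e j) ^ k' * b ^ (k - 1 - k') * d j` for all `k ≥ 0`. -/
theorem stmt_9 {R : Type*} [CommRing R] (n : ℕ) (a b : R) (d e : Fin n → R)
    (h1 : a = b + ∑ j, d j)
    (h2 : ∀ j, e j * d j = a * d j)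
    (h3 : ∀ j j', j ≠ j' → d j * d j' = 0) :
    ∀ k : ℕ, a ^ k =
      b ^ k + ∑ j, ∑ k' ∈ Finset.range k, (e j) ^ k' * b ^ (k - 1 - k') * d j :=
  stmt_9_general n a b d e h1 h2
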